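/- On ℝ⁸ = ℝ³ × ℝ × ℝ³ × ℝ with q(x,s,y,t) = x·y + st, every subspace of the form (a,b)₋ = { (x, −b·x, a×x + bt, t) : x ∈ ℝ³, t ∈ ℝ } with a, b ∈ ℝ³ is a maximal totally isotropic subspace of dimension 4, and for all a, b, a', b' ∈ ℝ³ the intersection (a,b)₊ ∩ (a',b')₋ has dimension 3 if and only if a' − a = b × b'. -/

import Mathlib

open Matrix

/-- `ℝ⁸ = ℝ³ × ℝ × ℝ³ × ℝ`. -/
abbrev V8 : Type := (Fin 3 → ℝ) × ℝ × (Fin 3 → ℝ) × ℝ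

/-- The quadratic form `q(x, s, y, t) = x·y + st` of signature `(4,4)`. -/
def q8 (p : V8) : ℝ := p.1 ⬝ᵥ p.2.2.1 + p.2.1 * p.2.2.2

/-- The set `(a,b)₊ = { (x, s, a×x + sb, −b·x) }`. -/
def plusSet (a b : Fin 3 → ℝ) : Set V8 :=
  {p | p.2.2.1 = a ⨯₃ p.1 + p.2.1 • b ∧ p.2.2.2 = -(b ⬝ᵥ p.1)}

/-- The set `(a,b)₋ = { (x, −b·x, a×x + tb, t) }`. -/
def minusSet (a b : Fin 3 → ℝ) : Set V8 :=
  {p | p.2.2.1 = a ⨯₃ p.1 + p.2.2.2 • b ∧ p.2.1 = -(b ⬝ᵥ p.1)}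

/-!
`(a,b)₋` is the image of the injective linear map `(x, t) ↦ (x, −b·x, a×x + tb, t)`, and `q`
vanishes on it because `x·(a×x) = 0`. At the parameter `(u, τ)`, the polar form of `q` pairs
`(x, s, y, t)` with `(a,b)₋` to `(y − a×x − tb)·u + (s + b·x)τ`. In a totally isotropic subspace
containing `(a,b)₋` this pairing vanishes, and the parameters `(y − a×x − tb, 0)` and `(0, 1)` put
every vector of the subspace back into `(a,b)₋`.

The point of `(a',b')₋` with parameter `(x, t)` lies in `(a,b)₊` iff `t = −b·x` and, by the
expansion `(b×b')×x = (b·x)b' − (b'·x)b`, `(a' − a − b×b')×x = 0`. So the intersection is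
isomorphic to the kernel of `c × ·` with `c = a' − a − b×b'`, which is all of `ℝ³` iff `c = 0`.
-/

theorem crossProduct_eq_zero_iff {R : Type*} [CommRing R] {c : Fin 3 → R} :
    crossProduct c = 0 ↔ c = 0 := by
  refine ⟨fun h => ?_, fun h => h ▸ map_zero _⟩
  have h₀ : c ⨯₃ ![1, 0, 0] = 0 := LinearMap.congr_fun h _
  have h₁ : c ⨯₃ ![0, 1, 0] = 0 := LinearMap.congr_fun h _
  ext i
  fin_cases i
  · simpa [cross_apply] using congrFun h₁ 2
  · simpa [cross_apply] using congrFun h₀ 2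
  · simpa [cross_apply] using congrFun h₀ 1

theorem finrank_ker_crossProduct_eq_three_iff {K : Type*} [Field K] {c : Fin 3 → K} :
    Module.finrank K (LinearMap.ker (crossProduct c)) = 3 ↔ c = 0 := by
  rw [← crossProduct_eq_zero_iff, ← LinearMap.ker_eq_top, Submodule.eq_top_iff_finrank_eq,
    Module.finrank_fin_fun]

theorem sub_sub_cross_cross {R : Type*} [CommRing R] (a b a' b' x : Fin 3 → R) :
    (a' - a - b ⨯₃ b') ⨯₃ x = (a' ⨯₃ x - (b ⬝ᵥ x) • b') - (a ⨯₃ x - (b' ⬝ᵥ x) • b) := by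
  simp only [map_sub, LinearMap.sub_apply, cross_cross_eq_smul_sub_smul]
  abel

theorem polar_eq_zero_of_forall_mem_eq_zero {R M N : Type*} [Semiring R] [AddCommGroup M]
    [Module R M] [AddCommGroup N] {f : M → N} {W : Submodule R M} (hW : ∀ w ∈ W, f w = 0)
    {p w : M} (hp : p ∈ W) (hw : w ∈ W) : QuadraticMap.polar f p w = 0 := by
  simp [QuadraticMap.polar, hW _ hp, hW _ hw, hW _ (W.add_mem hp hw)]

theorem polar_q8 (p w : V8) :
    QuadraticMap.polar q8 p w =
      p.1 ⬝ᵥ w.2.2.1 + w.1 ⬝ᵥ p.2.2.1 + p.2.1 * w.2.2.2 + w.2.1 * p.2.2.2 := by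
  simp only [QuadraticMap.polar, q8, Prod.fst_add, Prod.snd_add, dotProduct_add, add_dotProduct]
  ring

def minusParam (a b : Fin 3 → ℝ) : (Fin 3 → ℝ) × ℝ →ₗ[ℝ] V8 where
  toFun p := (p.1, -(b ⬝ᵥ p.1), a ⨯₃ p.1 + p.2 • b, p.2)
  map_add' p p' := by ext <;> simp [dotProduct_add, add_smul] <;> ring
  map_smul' r p := by ext <;> simp [dotProduct_smul, smul_smul]

section minusParam

variable (a b : Fin 3 → ℝ)

theorem minusParam_apply (x : Fin 3 → ℝ) (t : ℝ) :
    minusParam a b (x, t) = (x, -(b ⬝ᵥ x), a ⨯₃ x + t • b, t) := rfl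

theorem minusParam_injective : Function.Injective (minusParam a b) := by
  intro w w' h
  exact Prod.ext (congrArg (fun v : V8 => v.1) h) (congrArg (fun v : V8 => v.2.2.2) h)

theorem range_minusParam : Set.range (minusParam a b) = minusSet a b := by
  ext ⟨x, s, y, t⟩
  constructor
  · rintro ⟨⟨x, t⟩, h⟩
    rw [← h]
    exact ⟨rfl, rfl⟩
  · rintro ⟨hy, hs⟩
    exact ⟨(x, t), by rw [minusParam_apply, ← hy, ← hs]⟩

theorem q8_minusParam (w : (Fin 3 → ℝ) × ℝ) : q8 (minusParam a b w) = 0 := by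
  obtain ⟨x, t⟩ := w
  simp only [q8, minusParam_apply, dotProduct_add, dot_cross_self, dotProduct_smul, smul_eq_mul,
    dotProduct_comm x b]
  ring

theorem finrank_range_minusParam : Module.finrank ℝ (LinearMap.range (minusParam a b)) = 4 := by
  rw [LinearMap.finrank_range_of_inj (minusParam_injective a b), Module.finrank_prod,
    Module.finrank_fin_fun, Module.finrank_self]

theorem polar_q8_minusParam (p : V8) (u : Fin 3 → ℝ) (τ : ℝ) :
    QuadraticMap.polar q8 p (minusParam a b (u, τ)) =
      (p.2.2.1 - a ⨯₃ p.1 - p.2.2.2 • b) ⬝ᵥ u + (p.2.1 + b ⬝ᵥ p.1) * τ := by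
  obtain ⟨x, s, y, t⟩ := p
  have triple : x ⬝ᵥ a ⨯₃ u = -(a ⨯₃ x ⬝ᵥ u) := by
    rw [triple_product_permutation, ← cross_anticomm x u, dotProduct_neg,
      ← triple_product_permutation u, dotProduct_comm u]
  simp only [polar_q8, minusParam_apply, dotProduct_add, dotProduct_smul, sub_dotProduct,
    smul_dotProduct, triple, smul_eq_mul, dotProduct_comm u y, dotProduct_comm x b]
  ring

variable {a b} in
theorem mem_minusSet_of_polar_eq_zero {p : V8}
    (h : ∀ w, QuadraticMap.polar q8 p (minusParam a b w) = 0) : p ∈ minusSet a b := by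
  obtain ⟨x, s, y, t⟩ := p
  have hy := h (y - a ⨯₃ x - t • b, 0)
  have hs := h (0, 1)
  rw [polar_q8_minusParam] at hy hs
  simp only [mul_zero, add_zero, dotProduct_self_eq_zero, sub_sub, sub_eq_zero] at hy
  simp only [dotProduct_zero, mul_one, zero_add] at hs
  exact ⟨hy, eq_neg_of_add_eq_zero_left hs⟩

theorem eq_range_minusParam_of_isotropic {W : Submodule ℝ V8} (hW : ∀ w ∈ W, q8 w = 0)
    (hle : LinearMap.range (minusParam a b) ≤ W) : W = LinearMap.range (minusParam a b) := by
  refine le_antisymm (fun p hp => ?_) hle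
  rw [← SetLike.mem_coe, LinearMap.coe_range, range_minusParam]
  exact mem_minusSet_of_polar_eq_zero fun w =>
    polar_eq_zero_of_forall_mem_eq_zero hW hp (hle (LinearMap.mem_range_self _ w))

end minusParam

section plusSet_inf_minusSet

variable {a b a' b' : Fin 3 → ℝ}

theorem minusParam_mem_plusSet_iff {x : Fin 3 → ℝ} {t : ℝ} :
    minusParam a' b' (x, t) ∈ plusSet a b ↔
      t = -(b ⬝ᵥ x) ∧ (a' - a - b ⨯₃ b') ⨯₃ x = 0 := by
  show a' ⨯₃ x + t • b' = a ⨯₃ x + (-(b' ⬝ᵥ x)) • b ∧ t = -(b ⬝ᵥ x) ↔ _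
  rw [sub_sub_cross_cross, sub_eq_zero, neg_smul, ← sub_eq_add_neg, and_comm]
  refine and_congr_right fun ht => ?_
  rw [ht, neg_smul, ← sub_eq_add_neg]

theorem inf_eq_map_ker_crossProduct {Wp Wm : Submodule ℝ V8}
    (hWp : (Wp : Set V8) = plusSet a b) (hWm : (Wm : Set V8) = minusSet a' b') :
    Wp ⊓ Wm = (LinearMap.ker (crossProduct (a' - a - b ⨯₃ b'))).map
      (minusParam a' b' ∘ₗ LinearMap.id.prod (-dotProductBilin ℝ ℝ b)) := by
  ext p
  rw [Submodule.mem_inf, ← SetLike.mem_coe, hWp, ← SetLike.mem_coe (p := Wm), hWm,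
    ← range_minusParam, Submodule.mem_map]
  constructor
  · rintro ⟨hp, ⟨x, t⟩, rfl⟩
    obtain ⟨rfl, hx⟩ := minusParam_mem_plusSet_iff.1 hp
    exact ⟨x, hx, rfl⟩
  · rintro ⟨x, hx, rfl⟩
    exact ⟨minusParam_mem_plusSet_iff.2 ⟨rfl, hx⟩, Set.mem_range_self _⟩

theorem finrank_inf_eq_finrank_ker_crossProduct {Wp Wm : Submodule ℝ V8}
    (hWp : (Wp : Set V8) = plusSet a b) (hWm : (Wm : Set V8) = minusSet a' b') :
    Module.finrank ℝ ↥(Wp ⊓ Wm) =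
      Module.finrank ℝ (LinearMap.ker (crossProduct (a' - a - b ⨯₃ b'))) := by
  have hinj : Function.Injective
      (minusParam a' b' ∘ₗ LinearMap.id.prod (-dotProductBilin ℝ ℝ b)) :=
    (minusParam_injective a' b').comp fun x y h => congrArg Prod.fst h
  rw [inf_eq_map_ker_crossProduct hWp hWm]
  exact (Submodule.equivMapOfInjective _ hinj _).finrank_eq.symm

end plusSet_inf_minusSet

theorem darboux_stmt8 :
    (∀ (a b : Fin 3 → ℝ) (W : Submodule ℝ V8), (W : Set V8) = minusSet a b →
      (∀ w ∈ W, q8 w = 0) ∧ Module.finrank ℝ W = 4 ∧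
        ∀ W' : Submodule ℝ V8, (∀ w ∈ W', q8 w = 0) → W ≤ W' → W' = W) ∧
    (∀ (a b a' b' : Fin 3 → ℝ) (Wp Wm : Submodule ℝ V8),
      (Wp : Set V8) = plusSet a b → (Wm : Set V8) = minusSet a' b' →
      (Module.finrank ℝ ↥(Wp ⊓ Wm) = 3 ↔ a' - a = b ⨯₃ b')) := by
  refine ⟨fun a b W hW => ?_, fun a b a' b' Wp Wm hWp hWm => ?_⟩
  · obtain rfl : W = LinearMap.range (minusParam a b) := by
      rw [← SetLike.coe_set_eq, hW, LinearMap.coe_range, range_minusParam]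
    refine ⟨?_, finrank_range_minusParam a b, fun W' hW' hle =>
      eq_range_minusParam_of_isotropic a b hW' hle⟩
    rintro _ ⟨w, rfl⟩
    exact q8_minusParam a b w
  · rw [finrank_inf_eq_finrank_ker_crossProduct hWp hWm, finrank_ker_crossProduct_eq_three_iff,
      sub_eq_zero]
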